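/- arXiv:2306.01450 — 6 statements merged into one kernel-verified Lean document; each statement's English description precedes it below -/
import Mathlib

section
/- Let v_0, …, v_M ∈ ℝ^D and suppose the D×M matrix with columns v_h − v_0 (h = 1,…,M) has rank R with 1 ≤ R ≤ D. Then there exists a set I ⊆ {1,…,D} with |I| = R such that, denoting by p_I : ℝ^D → ℝ^R the coordinate projection x ↦ (x_i)_{i∈I} (coordinates listed in increasing index order), the R×M matrix with columns p_I(v_h) − p_I(v_0) (h = 1,…,M) has rank R, and the restriction of p_I to the convex hull of {v_0,…,v_M} is injective; consequently, for every y in the convex hull of {p_I(v_0),…,p_I(v_M)} there exists exactly one x in the convex hull of {v_0,…,v_M} with p_I(x) = y. -/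
/-! The differences `v h - v 0` span the direction `W` of the affine hull of the `v h`, a space
of dimension `R`. Keeping `R` linearly independent rows of the matrix of differences gives
coordinates `I` on which `p_I` still has rank `R` on `W`, so `p_I` is injective on `W`, hence on
the affine hull and on the convex hull; and a linear map sends a convex hull onto the convex hull
of the image points. -/

open Set

theorem Matrix.exists_finset_linearIndepOn_row_card_eq_rank {m n K : Type*} [Field K] [Fintype m]
    [Fintype n] (A : Matrix m n K) :
    ∃ I : Finset m, LinearIndepOn K A.row I ∧ I.card = A.rank := by
  classical
  obtain ⟨b, -, -, hspan, hli⟩ :=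
    exists_linearIndepOn_extension (linearIndepOn_empty K A.row) (empty_subset univ)
  refine ⟨b.toFinset, by simpa using hli, ?_⟩
  have hspan_eq : Submodule.span K (A.row '' b) = Submodule.span K (range A.row) :=
    le_antisymm (Submodule.span_mono (image_subset_range _ _))
      (Submodule.span_le.2 (by simpa using hspan))
  rw [A.rank_eq_finrank_span_row, ← hspan_eq, image_eq_range, finrank_span_eq_card hli,
    Set.toFinset_card]

theorem Matrix.exists_finset_rank_submatrix_orderEmbOfFin {m n K : Type*} [Field K]
    [LinearOrder m] [Fintype m] [Fintype n] (A : Matrix m n K) {r : ℕ} (hA : A.rank = r) :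
    ∃ (I : Finset m) (hI : I.card = r), (A.submatrix (I.orderEmbOfFin hI) id).rank = r := by
  obtain ⟨I, hli, hcard⟩ := A.exists_finset_linearIndepOn_row_card_eq_rank
  refine ⟨I, hcard.trans hA, ?_⟩
  have hrows : LinearIndependent K (A.submatrix (I.orderEmbOfFin (hcard.trans hA)) id).row :=
    hli.comp (fun i => ⟨_, I.orderEmbOfFin_mem _ i⟩) fun i j hij => by simpa using hij
  rw [hrows.rank_matrix, Fintype.card_fin]

theorem vectorSpan_range_eq_range_mulVecLin {K m : Type*} [CommRing K] {M : ℕ}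
    (v : Fin (M + 1) → m → K) :
    vectorSpan K (range v) =
      LinearMap.range (Matrix.of fun i (h : Fin M) => v h.succ i - v 0 i).mulVecLin := by
  rw [vectorSpan_range_eq_span_range_vsub_right K v 0, Matrix.range_mulVecLin, Fin.range_fin_succ]
  simp only [vsub_eq_sub, sub_self, Submodule.span_insert_zero]
  rfl

theorem Matrix.disjoint_range_mulVecLin_ker_funLeft {m n r K : Type*} [Field K] [Fintype n]
    [Fintype r] (A : Matrix m n K) (e : r → m) (h : (A.submatrix e id).rank = A.rank) :
    Disjoint (LinearMap.range A.mulVecLin) (LinearMap.ker (LinearMap.funLeft K K e)) := by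
  refine Submodule.disjoint_ker_of_finrank_le _ ?_
  rw [← LinearMap.range_comp]
  exact h.symm.le

theorem LinearMap.injOn_affineSpan_of_disjoint_ker {k E F : Type*} [Ring k] [AddCommGroup E]
    [Module k E] [AddCommGroup F] [Module k F] (f : E →ₗ[k] F) {s : Set E}
    (h : Disjoint (vectorSpan k s) (LinearMap.ker f)) : InjOn f (affineSpan k s) := by
  intro x hx y hy hxy
  have hsub : x - y ∈ vectorSpan k s := by
    simpa [direction_affineSpan] using AffineSubspace.vsub_mem_direction hx hy
  have hker : x - y ∈ LinearMap.ker f := by simp [hxy]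
  exact sub_eq_zero.1 ((Submodule.disjoint_def.1 h) _ hsub hker)

theorem LinearMap.existsUnique_mem_convexHull_of_injOn {𝕜 E F : Type*} [Field 𝕜]
    [LinearOrder 𝕜] [IsStrictOrderedRing 𝕜] [AddCommGroup E] [Module 𝕜 E] [AddCommGroup F]
    [Module 𝕜 F]
    (f : E →ₗ[𝕜] F) {s : Set E} (hf : InjOn f (convexHull 𝕜 s)) {y : F}
    (hy : y ∈ convexHull 𝕜 (f '' s)) : ∃! x, x ∈ convexHull 𝕜 s ∧ f x = y := by
  rw [← f.image_convexHull] at hy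
  obtain ⟨x, hx, rfl⟩ := hy
  exact ⟨x, ⟨hx, rfl⟩, fun z hz => hf hz.1 hx hz.2⟩

theorem stmt1_general (D M R : ℕ)
    (v : Fin (M + 1) → Fin D → ℝ)
    (hrank : (Matrix.of fun (i : Fin D) (h : Fin M) => v h.succ i - v 0 i).rank = R) :
    ∃ (I : Finset (Fin D)) (hI : I.card = R),
      (Matrix.of fun (r : Fin R) (h : Fin M) =>
          v h.succ (I.orderEmbOfFin hI r) - v 0 (I.orderEmbOfFin hI r)).rank = R ∧
      Set.InjOn (fun (x : Fin D → ℝ) (r : Fin R) => x (I.orderEmbOfFin hI r))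
        (convexHull ℝ (Set.range v)) ∧
      ∀ y ∈ convexHull ℝ (Set.range fun (h : Fin (M + 1)) (r : Fin R) =>
          v h (I.orderEmbOfFin hI r)),
        ∃! x, x ∈ convexHull ℝ (Set.range v) ∧
          (fun r : Fin R => x (I.orderEmbOfFin hI r)) = y := by
  set A : Matrix (Fin D) (Fin M) ℝ := Matrix.of fun i h => v h.succ i - v 0 i
  obtain ⟨I, hI, hB⟩ := A.exists_finset_rank_submatrix_orderEmbOfFin hrank
  let p := LinearMap.funLeft ℝ ℝ (I.orderEmbOfFin hI)
  have hdisj : Disjoint (vectorSpan ℝ (range v)) (LinearMap.ker p) := by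
    rw [vectorSpan_range_eq_range_mulVecLin]
    exact A.disjoint_range_mulVecLin_ker_funLeft _ (hB.trans hrank.symm)
  have hinj : InjOn p (convexHull ℝ (range v)) :=
    (p.injOn_affineSpan_of_disjoint_ker hdisj).mono (convexHull_subset_affineSpan _)
  refine ⟨I, hI, hB, hinj, fun y hy => p.existsUnique_mem_convexHull_of_injOn hinj ?_⟩
  rwa [← range_comp]

theorem stmt1 (D M R : ℕ) (hR1 : 1 ≤ R) (hRD : R ≤ D)
    (v : Fin (M + 1) → Fin D → ℝ)
    (hrank : (Matrix.of fun (i : Fin D) (h : Fin M) => v h.succ i - v 0 i).rank = R) :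
    ∃ (I : Finset (Fin D)) (hI : I.card = R),
      (Matrix.of fun (r : Fin R) (h : Fin M) =>
          v h.succ (I.orderEmbOfFin hI r) - v 0 (I.orderEmbOfFin hI r)).rank = R ∧
      Set.InjOn (fun (x : Fin D → ℝ) (r : Fin R) => x (I.orderEmbOfFin hI r))
        (convexHull ℝ (Set.range v)) ∧
      ∀ y ∈ convexHull ℝ (Set.range fun (h : Fin (M + 1)) (r : Fin R) =>
          v h (I.orderEmbOfFin hI r)),
        ∃! x, x ∈ convexHull ℝ (Set.range v) ∧
          (fun r : Fin R => x (I.orderEmbOfFin hI r)) = y :=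
  stmt1_general D M R v hrank
end

section
/- Let H ≥ 1 and m be integers with 1 ≤ m < H, and let c_1, …, c_H ∈ ℝ. Then Σ_{h=1}^{H} (−1)^{H−h} Σ_{S ⊆ {1,…,H}, |S| = h} (Σ_{i∈S} c_i)^m = 0, where the inner sum ranges over all subsets S of {1,…,H} of cardinality h. -/
/-!
Expand `(∑ i ∈ S, c i) ^ m` as a sum over words `p : Fin m → ι` of `∏ j, c (p j)`, a word
contributing exactly when its image lies in `S`. After exchanging the sums, the coefficient of a
word is `∑ S ⊇ image p, (-1) ^ #Sᶜ`, which vanishes because the image has at most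
`m < card ι` elements and so is a proper subset. The term `h = 0` is `0 ^ m = 0` since `m ≥ 1`.
-/

open Finset

section

variable {ι R : Type*} [Fintype ι] [DecidableEq ι] [CommRing R]

theorem sum_neg_one_pow_card_compl_of_superset_eq_zero {t : Finset ι} (ht : t ≠ univ) :
    ∑ S with t ⊆ S, (-1 : R) ^ #Sᶜ = 0 := by
  have hcompl : tᶜ.Nonempty := nonempty_iff_ne_empty.2 ((compl_eq_empty_iff t).not.2 ht)
  calc ∑ S with t ⊆ S, (-1 : R) ^ #Sᶜ = ∑ B ∈ tᶜ.powerset, (-1 : R) ^ #B :=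
        sum_nbij' compl compl (by simp) (by simp [subset_compl_comm]) (by simp) (by simp)
          (by simp)
    _ = ((∑ B ∈ tᶜ.powerset, (-1 : ℤ) ^ #B : ℤ) : R) := by push_cast; rfl
    _ = 0 := by rw [sum_powerset_neg_one_pow_card_of_nonempty hcompl, Int.cast_zero]

theorem sum_pow_eq_sum_ite_image_subset (f : ι → R) (S : Finset ι) (m : ℕ) :
    (∑ i ∈ S, f i) ^ m = ∑ p : Fin m → ι, if univ.image p ⊆ S then ∏ j, f (p j) else 0 := by
  calc (∑ i ∈ S, f i) ^ m = ∏ _j : Fin m, ∑ i, if i ∈ S then f i else 0 := by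
        rw [Fintype.sum_ite_mem, prod_const, card_univ, Fintype.card_fin]
    _ = ∑ p : Fin m → ι, ∏ j, if p j ∈ S then f (p j) else 0 := Fintype.prod_sum _
    _ = _ := by simp only [prod_ite_zero, image_subset_iff, mem_univ, true_implies]

theorem sum_neg_one_pow_card_compl_mul_sum_pow_eq_zero (f : ι → R) {m : ℕ}
    (hm : m < Fintype.card ι) : ∑ S : Finset ι, (-1 : R) ^ #Sᶜ * (∑ i ∈ S, f i) ^ m = 0 := by
  have himage (p : Fin m → ι) : univ.image p ≠ univ := fun h => by
    have := (card_image_le (s := univ) (f := p)).trans_eq (card_fin m)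
    rw [h, card_univ] at this
    omega
  calc ∑ S : Finset ι, (-1 : R) ^ #Sᶜ * (∑ i ∈ S, f i) ^ m
      = ∑ p : Fin m → ι, (∑ S with univ.image p ⊆ S, (-1 : R) ^ #Sᶜ) * ∏ j, f (p j) := by
        simp only [sum_pow_eq_sum_ite_image_subset, mul_sum, mul_ite, mul_zero, sum_mul,
          sum_filter, ite_mul, zero_mul]
        exact sum_comm
    _ = 0 := sum_eq_zero fun p _ => by
        rw [sum_neg_one_pow_card_compl_of_superset_eq_zero (himage p), zero_mul]

end

theorem stmt6_general (H m : ℕ) (hm1 : 1 ≤ m) (hmH : m < H) (c : Fin H → ℝ) :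
    ∑ h ∈ Finset.Icc 1 H, (-1 : ℝ) ^ (H - h) *
      ∑ S ∈ Finset.powersetCard h (Finset.univ : Finset (Fin H)), (∑ i ∈ S, c i) ^ m = 0 := by
  have hempty : (-1 : ℝ) ^ (H - 0) *
      ∑ S ∈ powersetCard 0 (univ : Finset (Fin H)), (∑ i ∈ S, c i) ^ m = 0 := by
    simp [zero_pow (by omega : m ≠ 0)]
  calc ∑ h ∈ Icc 1 H, (-1 : ℝ) ^ (H - h) *
        ∑ S ∈ powersetCard h (univ : Finset (Fin H)), (∑ i ∈ S, c i) ^ m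
      = ∑ h ∈ range (H + 1), (-1 : ℝ) ^ (H - h) *
        ∑ S ∈ powersetCard h (univ : Finset (Fin H)), (∑ i ∈ S, c i) ^ m := by
        rw [range_eq_Ico, sum_eq_sum_Ico_succ_bot (by omega), hempty, zero_add]
        rfl
    _ = ∑ S : Finset (Fin H), (-1 : ℝ) ^ #Sᶜ * (∑ i ∈ S, c i) ^ m := by
        rw [← powerset_univ, sum_powerset, card_univ, Fintype.card_fin]
        refine sum_congr rfl fun h _ => ?_
        rw [mul_sum]
        refine sum_congr rfl fun S hS => ?_
        rw [card_compl, Fintype.card_fin, (mem_powersetCard.1 hS).2]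
    _ = 0 := sum_neg_one_pow_card_compl_mul_sum_pow_eq_zero c (by simpa)

theorem stmt6 (H m : ℕ) (hH : 1 ≤ H) (hm1 : 1 ≤ m) (hmH : m < H) (c : Fin H → ℝ) :
    ∑ h ∈ Finset.Icc 1 H, (-1 : ℝ) ^ (H - h) *
      ∑ S ∈ Finset.powersetCard h (Finset.univ : Finset (Fin H)), (∑ i ∈ S, c i) ^ m = 0 :=
  stmt6_general H m hm1 hmH c
end

section
/- Let H ≥ 0 be an integer, s ≥ 0, and p_0, …, p_H ≥ 0 reals. Then the series Σ_{n=H}^{∞} e^{−s} (s^n/n!) · [ Σ_{(n_0,…,n_H)} ((n+1)!/(n_0!⋯n_H!)) p_0^{n_0}⋯p_H^{n_H} ] converges, where for each n the inner sum ranges over all (H+1)-tuples of positive integers n_0,…,n_H ≥ 1 with n_0+⋯+n_H = n+1, and its value equals Σ_{h=1}^{H+1} (−1)^{H+1−h} Σ_{S ⊆ {0,…,H}, |S| = h} (Σ_{i∈S} p_i) e^{−s(1 − Σ_{i∈S} p_i)}. -/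
/-!
Expanding `(∑ i ∈ S, p i) ^ (n + 1)` by the multinomial theorem for every `S ⊆ {0, …, H}` and
taking the alternating sum over `S` kills exactly the multi-indices with a zero entry, since
`∑_S (-1)^|Sᶜ| ∏_i (𝟙[i ∈ S] p i)^(k i) = ∏_i (p i^(k i) - 0^(k i))`. So the inner sum of the series
is `∑_S ± (∑_{i ∈ S} p i)^(n + 1)`, and each `S` contributes the Poisson-type series
`∑_n e^{-s} s^n/n! · t^(n+1) = t e^{-s(1-t)}` with `t = ∑_{i ∈ S} p i`.
-/

open Finset

section InclusionExclusion

variable {α R : Type*} [Fintype α] [DecidableEq α] [CommRing R]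

lemma prod_ite_mem_pow (S : Finset α) (p : α → R) (k : α → ℕ) :
    ∏ i, (if i ∈ S then p i else 0) ^ k i = (∏ i ∈ S, p i ^ k i) * ∏ i ∈ Sᶜ, 0 ^ k i := by
  simp_rw [ite_pow, prod_ite, filter_mem_eq_inter, univ_inter, filter_not, filter_mem_eq_inter,
    univ_inter, compl_eq_univ_sdiff]

lemma sum_neg_one_pow_card_compl_mul_prod_ite_mem_pow (p : α → R) (k : α → ℕ) :
    ∑ S : Finset α, (-1) ^ #Sᶜ * ∏ i, (if i ∈ S then p i else 0) ^ k i
      = ∏ i, (p i ^ k i - 0 ^ k i) := by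
  rw [← powerset_univ]
  simp_rw [sub_eq_add_neg, prod_add, prod_neg, prod_ite_mem_pow, compl_eq_univ_sdiff]
  exact sum_congr rfl fun S _ => by ring

lemma sum_mem_pow_eq_sum_piAntidiag (S : Finset α) (p : α → R) (N : ℕ) :
    (∑ i ∈ S, p i) ^ N = ∑ k ∈ piAntidiag univ N,
      Nat.multinomial univ k * ∏ i, (if i ∈ S then p i else 0) ^ k i := by
  rw [← sum_pow_eq_sum_piAntidiag, ← Fintype.sum_ite_mem]

theorem sum_piAntidiag_ne_zero_multinomial_mul_prod_pow (p : α → R) (N : ℕ) :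
    ∑ k ∈ piAntidiag univ N with ∀ i, k i ≠ 0, (Nat.multinomial univ k : R) * ∏ i, p i ^ k i
      = ∑ S : Finset α, (-1) ^ #Sᶜ * (∑ i ∈ S, p i) ^ N := by
  simp_rw [sum_mem_pow_eq_sum_piAntidiag, mul_sum, sum_comm (s := (univ : Finset (Finset α))),
    mul_left_comm _ (Nat.multinomial _ _ : R), ← mul_sum,
    sum_neg_one_pow_card_compl_mul_prod_ite_mem_pow, sum_filter]
  refine sum_congr rfl fun k _ => ?_
  split_ifs with hk
  · simp [hk, zero_pow]
  · obtain ⟨i, hi⟩ := not_forall.1 hk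
    rw [prod_eq_zero (mem_univ i) (by simp [not_not.1 hi]), mul_zero]

end InclusionExclusion

section Reindexing

variable {α : Type*} [Fintype α]

lemma filter_piFinset_Icc_sum_eq [DecidableEq α] (N : ℕ) :
    {m ∈ Fintype.piFinset fun _ : α => Icc 1 N | ∑ i, m i = N}
      = {k ∈ piAntidiag (univ : Finset α) N | ∀ i, k i ≠ 0} := by
  ext m
  simp only [mem_filter, Fintype.mem_piFinset, mem_Icc, mem_piAntidiag, Nat.one_le_iff_ne_zero]
  constructor
  · rintro ⟨hm, hsum⟩
    exact ⟨⟨hsum, fun i _ => mem_univ i⟩, fun i => (hm i).1⟩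
  · rintro ⟨⟨hsum, -⟩, hm⟩
    exact ⟨fun i => ⟨hm i, hsum ▸ single_le_sum (fun j _ => Nat.zero_le (m j)) (mem_univ i)⟩,
      hsum⟩

lemma sum_univ_finset_eq_sum_Icc_powersetCard {R : Type*} [Semiring R] (c : ℕ → R)
    (f : Finset α → R) (hf : f ∅ = 0) :
    ∑ S : Finset α, c #S * f S
      = ∑ h ∈ Icc 1 (Fintype.card α), c h * ∑ S ∈ powersetCard h univ, f S := by
  calc ∑ S : Finset α, c #S * f S
      = ∑ h ∈ range (Fintype.card α + 1), c h * ∑ S ∈ powersetCard h univ, f S := by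
        rw [← powerset_univ, sum_powerset, card_univ]
        refine sum_congr rfl fun h _ => ?_
        rw [mul_sum]
        exact sum_congr rfl fun S hS => by rw [(mem_powersetCard.1 hS).2]
    _ = ∑ h ∈ Icc 1 (Fintype.card α), c h * ∑ S ∈ powersetCard h univ, f S := by
        refine (sum_subset (fun h hh => ?_) fun h hh hh' => ?_).symm
        · simp only [mem_Icc, mem_range] at hh ⊢
          omega
        · obtain rfl : h = 0 := by simp only [mem_Icc, mem_range] at hh hh'; omega
          simp [hf]

end Reindexing

lemma hasSum_exp_neg_mul_pow_div_factorial_mul_pow_succ (s t : ℝ) :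
    HasSum (fun n : ℕ => Real.exp (-s) * (s ^ n / n.factorial) * t ^ (n + 1))
      (t * Real.exp (-s * (1 - t))) := by
  have h := (NormedSpace.expSeries_div_hasSum_exp (s * t)).mul_left (Real.exp (-s) * t)
  rw [← Real.exp_eq_exp_ℝ] at h
  have hterm : (fun n : ℕ => Real.exp (-s) * (s ^ n / n.factorial) * t ^ (n + 1))
      = fun n : ℕ => Real.exp (-s) * t * ((s * t) ^ n / n.factorial) :=
    funext fun n => by ring
  rw [hterm, show -s * (1 - t) = -s + s * t by ring, Real.exp_add, ← mul_assoc, mul_comm t]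
  exact h

theorem stmt9_general (H : ℕ) (s : ℝ)
    (p : Fin (H + 1) → ℝ) :
    HasSum
      (fun n : ℕ => Real.exp (-s) * (s ^ n / (n.factorial : ℝ)) *
        ∑ m ∈ (Fintype.piFinset fun _ : Fin (H + 1) => Finset.Icc 1 (n + 1)).filter
            (fun m => ∑ i, m i = n + 1),
          (Nat.multinomial Finset.univ m : ℝ) * ∏ i, p i ^ m i)
      (∑ h ∈ Finset.Icc 1 (H + 1), (-1 : ℝ) ^ (H + 1 - h) *
        ∑ S ∈ Finset.powersetCard h (Finset.univ : Finset (Fin (H + 1))),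
          (∑ i ∈ S, p i) * Real.exp (-s * (1 - ∑ i ∈ S, p i))) := by
  have hseries := hasSum_sum (s := univ) fun (S : Finset (Fin (H + 1))) _ =>
    (hasSum_exp_neg_mul_pow_div_factorial_mul_pow_succ s (∑ i ∈ S, p i)).mul_left
      ((-1 : ℝ) ^ (H + 1 - #S))
  rw [sum_univ_finset_eq_sum_Icc_powersetCard (fun h => (-1 : ℝ) ^ (H + 1 - h)) _ (by simp),
    Fintype.card_fin] at hseries
  refine hseries.congr_fun fun n => ?_
  rw [filter_piFinset_Icc_sum_eq, sum_piAntidiag_ne_zero_multinomial_mul_prod_pow, mul_sum]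
  exact sum_congr rfl fun S _ => by rw [card_compl, Fintype.card_fin]; ring

theorem stmt9 (H : ℕ) (s : ℝ) (hs : 0 ≤ s)
    (p : Fin (H + 1) → ℝ) (hp : ∀ i, 0 ≤ p i) :
    HasSum
      (fun n : ℕ => Real.exp (-s) * (s ^ n / (n.factorial : ℝ)) *
        ∑ m ∈ (Fintype.piFinset fun _ : Fin (H + 1) => Finset.Icc 1 (n + 1)).filter
            (fun m => ∑ i, m i = n + 1),
          (Nat.multinomial Finset.univ m : ℝ) * ∏ i, p i ^ m i)
      (∑ h ∈ Finset.Icc 1 (H + 1), (-1 : ℝ) ^ (H + 1 - h) *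
        ∑ S ∈ Finset.powersetCard h (Finset.univ : Finset (Fin (H + 1))),
          (∑ i ∈ S, p i) * Real.exp (-s * (1 - ∑ i ∈ S, p i))) :=
  stmt9_general H s p
end

section
/- Let D ≥ 0 be an integer, s ≥ 0, and p_0, …, p_D ≥ 0 reals with p_0 + ⋯ + p_D = 1. Then e^{−s} Σ_{h=0}^{D} p_h e^{s p_h} ∏_{j=0, j≠h}^{D} (e^{s p_j} − 1) = 1 − Σ_{h=1}^{D} (−1)^{D−h} Σ_{S ⊆ {0,…,D}, |S| = h} (Σ_{i∈S} p_i) e^{−s(1 − Σ_{i∈S} p_i)}. -/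
/-! With `x j = exp (s * p j)`, expanding every product `∏_{j ≠ h} (x j - 1)` and collecting the
terms by the subset `S` of factors `x j` taken (always containing `h`) turns the left-hand side into
`∑_S (-1)^|Sᶜ| (∑_{i ∈ S} p i) exp (-s (1 - ∑_{i ∈ S} p i))`, since `∏_{j ∈ S} x j` only depends on
`∑_{i ∈ S} p i`. Grouping by `|S|`, the empty set contributes `0` and the full set contributes `1`
because `∑ p i = 1`. -/

open Finset

section Expansion

variable {ι R : Type*} [Fintype ι] [DecidableEq ι] [CommRing R]

theorem mul_prod_erase_sub_one (x : ι → R) (h : ι) :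
    x h * ∏ j ∈ univ.erase h, (x j - 1) =
      ∑ S : Finset ι, if h ∈ S then (-1) ^ #Sᶜ * ∏ j ∈ S, x j else 0 := by
  -- Read the missing factor as `x h - 0` and expand the product over all of `ι`.
  have hfull : x h * ∏ j ∈ univ.erase h, (x j - 1) =
      ∏ j, (x j + -(if j = h then 0 else 1)) := by
    rw [← mul_prod_erase univ _ (mem_univ h)]
    simp +contextual [prod_congr rfl, sub_eq_add_neg]
  rw [hfull, prod_add, ← powerset_univ]
  refine sum_congr rfl fun S _ => ?_
  split_ifs with hS
  · rw [← compl_eq_univ_sdiff, mul_comm, prod_congr rfl fun j hj => ?_, prod_const]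
    rw [if_neg (ne_of_mem_of_not_mem hS (mem_compl.mp hj)).symm]
  · exact mul_eq_zero_of_right _ (prod_eq_zero (mem_sdiff.mpr ⟨mem_univ h, hS⟩) (by simp))

theorem sum_mul_mul_prod_erase_sub_one (a x : ι → R) :
    ∑ h, a h * (x h * ∏ j ∈ univ.erase h, (x j - 1)) =
      ∑ S : Finset ι, (∑ h ∈ S, a h) * ((-1) ^ #Sᶜ * ∏ j ∈ S, x j) := by
  simp_rw [mul_prod_erase_sub_one, mul_sum, mul_ite, mul_zero]
  rw [sum_comm]
  refine sum_congr rfl fun S _ => ?_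
  rw [sum_ite_mem, univ_inter, sum_mul]

end Expansion

theorem sum_neg_one_pow_card_compl_mul {α R : Type*} [Fintype α] [DecidableEq α] [CommRing R]
    {D : ℕ} (hα : Fintype.card α = D + 1) (f : Finset α → R) (hf : f ∅ = 0) :
    ∑ S : Finset α, (-1) ^ #Sᶜ * f S =
      f univ - ∑ k ∈ Icc 1 D, (-1) ^ (D - k) * ∑ S ∈ powersetCard k univ, f S := by
  have hlayer : ∀ k ∈ range D, ∑ S ∈ powersetCard (k + 1) univ, (-1) ^ #Sᶜ * f S =
      -((-1) ^ (D - (k + 1)) * ∑ S ∈ powersetCard (k + 1) univ, f S) := by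
    intro k hk
    rw [mul_sum, ← sum_neg_distrib]
    refine sum_congr rfl fun S hS => ?_
    rw [card_compl, hα, (mem_powersetCard.mp hS).2,
      show D + 1 - (k + 1) = D - (k + 1) + 1 by grind, pow_succ]
    ring
  have hIcc : ∑ k ∈ Icc 1 D, (-1) ^ (D - k) * ∑ S ∈ powersetCard k univ, f S =
      ∑ k ∈ range D, (-1) ^ (D - (k + 1)) * ∑ S ∈ powersetCard (k + 1) univ, f S := by
    rw [← Ico_add_one_right_eq_Icc, sum_Ico_eq_sum_range, add_tsub_cancel_right]
    simp only [add_comm 1]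
  rw [← powerset_univ, sum_powerset, card_univ, hα, sum_range_succ, sum_range_succ',
    sum_congr rfl hlayer, sum_neg_distrib, ← hα, ← card_univ, powersetCard_self, hIcc]
  simp only [powersetCard_zero, sum_singleton, hf, mul_zero, add_zero, compl_univ, card_empty,
    pow_zero, one_mul]
  abel

theorem stmt12_general (D : ℕ) (s : ℝ)
    (p : Fin (D + 1) → ℝ) (hsum : ∑ i, p i = 1) :
    Real.exp (-s) * ∑ h : Fin (D + 1), p h * Real.exp (s * p h) *
        ∏ j ∈ Finset.univ.erase h, (Real.exp (s * p j) - 1) =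
    1 - ∑ h ∈ Finset.Icc 1 D, (-1 : ℝ) ^ (D - h) *
      ∑ S ∈ Finset.powersetCard h (Finset.univ : Finset (Fin (D + 1))),
        (∑ i ∈ S, p i) * Real.exp (-s * (1 - ∑ i ∈ S, p i)) := by
  set f : Finset (Fin (D + 1)) → ℝ := fun S => (∑ i ∈ S, p i) * Real.exp (-s * (1 - ∑ i ∈ S, p i))
  have hterm : ∀ S : Finset (Fin (D + 1)),
      Real.exp (-s) * ((∑ i ∈ S, p i) * ((-1) ^ #Sᶜ * ∏ j ∈ S, Real.exp (s * p j))) =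
        (-1) ^ #Sᶜ * f S := by
    intro S
    dsimp only [f]
    rw [← Real.exp_sum, ← mul_sum, show -s * (1 - ∑ i ∈ S, p i) = -s + s * ∑ i ∈ S, p i by ring,
      Real.exp_add]
    ring
  have hf_univ : f univ = 1 := by simp [f, hsum]
  calc Real.exp (-s) * ∑ h, p h * Real.exp (s * p h) * ∏ j ∈ univ.erase h, (Real.exp (s * p j) - 1)
      = ∑ S : Finset (Fin (D + 1)), (-1) ^ #Sᶜ * f S := by
        simp_rw [mul_assoc, sum_mul_mul_prod_erase_sub_one, mul_sum, hterm]
    _ = _ := by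
        rw [sum_neg_one_pow_card_compl_mul (Fintype.card_fin _) f (by simp [f]), hf_univ]

theorem stmt12 (D : ℕ) (s : ℝ) (hs : 0 ≤ s)
    (p : Fin (D + 1) → ℝ) (hp : ∀ i, 0 ≤ p i) (hsum : ∑ i, p i = 1) :
    Real.exp (-s) * ∑ h : Fin (D + 1), p h * Real.exp (s * p h) *
        ∏ j ∈ Finset.univ.erase h, (Real.exp (s * p j) - 1) =
    1 - ∑ h ∈ Finset.Icc 1 D, (-1 : ℝ) ^ (D - h) *
      ∑ S ∈ Finset.powersetCard h (Finset.univ : Finset (Fin (D + 1))),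
        (∑ i ∈ S, p i) * Real.exp (-s * (1 - ∑ i ∈ S, p i)) :=
  stmt12_general D s p hsum
end

section
/- Let D ≥ 0 be an integer and c_0, …, c_D ≥ 0 reals. Then the series Σ_{(m_0,…,m_D)} (m_0 + ⋯ + m_D + D + 1)! ∏_{h=0}^{D} c_h^{m_h} / (m_h! (m_h + 1)!), where the sum ranges over all (D+1)-tuples of nonnegative integers m_0,…,m_D ≥ 0, converges, and its value equals the (finite) Lebesgue integral ∫_0^∞ e^{−w} w^{D+1} ∏_{h=0}^{D} ( Σ_{m=0}^{∞} (c_h w)^m / (m! (m+1)!) ) dw. -/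
/-!
Expanding the product of the `D + 1` series writes the integrand as a series of nonnegative
terms `e^{-w} w^{|m| + D + 1} a_m`, and the Gamma integral turns each term into
`(|m| + D + 1)! a_m`; for nonnegative terms, summing and integrating commute as soon as the series
of integrals converges. That series converges because the multinomial bound
`(∑ νᵢ)! ≤ k^(∑ νᵢ) ∏ νᵢ!` dominates it by a product of exponential series.
-/

open MeasureTheory Finset Real Nat Set

theorem Nat.multinomial_le_card_pow {ι : Type*} [Fintype ι] [DecidableEq ι] (f : ι → ℕ) :
    multinomial univ f ≤ Fintype.card ι ^ (∑ i, f i) := by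
  have h := sum_pow_eq_sum_piAntidiag (R := ℕ) (univ : Finset ι) (fun _ => 1) (∑ i, f i)
  simp only [sum_const, smul_eq_mul, mul_one, one_pow, prod_const_one, Nat.cast_id] at h
  rw [← Finset.card_univ, h]
  exact single_le_sum (f := fun k => multinomial univ k) (fun _ _ => Nat.zero_le _)
    (mem_piAntidiag.2 ⟨rfl, fun i _ => mem_univ i⟩)

theorem Nat.factorial_sum_le {ι : Type*} [Fintype ι] (f : ι → ℕ) :
    (∑ i, f i)! ≤ Fintype.card ι ^ (∑ i, f i) * ∏ i, (f i)! := by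
  classical
  rw [← multinomial_spec, mul_comm]
  exact Nat.mul_le_mul_right _ (multinomial_le_card_pow f)

theorem hasSum_fin_pi_prod {β : Type*} {n : ℕ} {f : Fin n → β → ℝ}
    (hf : ∀ i b, 0 ≤ f i b) (hs : ∀ i, Summable (f i)) :
    HasSum (fun p : Fin n → β => ∏ i, f i (p i)) (∏ i, ∑' b, f i b) := by
  induction n with
  | zero => simp
  | succ n ih =>
    have htail := ih (fun i b => hf i.succ b) fun i => hs i.succ
    have hprod := Summable.mul_of_nonneg (hs 0) htail.summable (fun b => hf 0 b)
      fun p => prod_nonneg fun i _ => hf i.succ (p i)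
    have hmul := (hs 0).hasSum.mul htail hprod
    rw [Fin.prod_univ_succ, ← (Fin.consEquiv fun _ => β).hasSum_iff]
    simpa [Function.comp_def, Fin.consEquiv, Fin.prod_univ_succ] using hmul

theorem summable_pow_div_factorial_mul_factorial_succ (x : ℝ) :
    Summable fun m : ℕ => x ^ m / ((m ! : ℝ) * ((m + 1)! : ℝ)) := by
  refine (Real.summable_pow_div_factorial |x|).of_norm_bounded fun m => ?_
  rw [norm_div, norm_pow, Real.norm_eq_abs, Real.norm_of_nonneg (by positivity)]
  gcongr
  exact le_mul_of_one_le_right (by positivity) (by exact_mod_cast (m + 1).factorial_pos)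

theorem hasSum_pow_sum_mul_prod {n : ℕ} {c : Fin n → ℝ} (hc : ∀ i, 0 ≤ c i) {w : ℝ}
    (hw : 0 ≤ w) :
    HasSum (fun m : Fin n → ℕ =>
        w ^ (∑ h, m h) * ∏ h, c h ^ m h / (((m h)! : ℝ) * ((m h + 1)! : ℝ)))
      (∏ h, ∑' k : ℕ, (c h * w) ^ k / ((k ! : ℝ) * ((k + 1)! : ℝ))) := by
  convert hasSum_fin_pi_prod (fun h k => by have := hc h; positivity)
    fun h => summable_pow_div_factorial_mul_factorial_succ (c h * w) using 1
  ext m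
  rw [← prod_pow_eq_pow_sum, ← prod_mul_distrib]
  congr 1 with h
  ring

theorem summable_factorial_sum_add_mul_prod {n : ℕ} {c : Fin n → ℝ} (hc : ∀ i, 0 ≤ c i) :
    Summable fun m : Fin n → ℕ => (((∑ h, m h) + n)! : ℝ) *
      ∏ h, c h ^ m h / (((m h)! : ℝ) * ((m h + 1)! : ℝ)) := by
  have hprod : ∀ m : Fin n → ℕ, 0 ≤ ∏ h, c h ^ m h / (((m h)! : ℝ) * ((m h + 1)! : ℝ)) :=
    fun m => prod_nonneg fun h _ => by have := hc h; positivity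
  have hexp := hasSum_fin_pi_prod (f := fun h (k : ℕ) => ((n : ℝ) * c h) ^ k / (k ! : ℝ))
    (fun h k => by have := hc h; positivity) fun h => Real.summable_pow_div_factorial _
  refine (hexp.summable.mul_left ((n : ℝ) ^ n)).of_nonneg_of_le
    (fun m => mul_nonneg (by positivity) (hprod m)) fun m => ?_
  have hfact : (((∑ h, m h) + n)! : ℝ) ≤ (n : ℝ) ^ ((∑ h, m h) + n) * ∏ h, ((m h + 1)! : ℝ) := by
    have := Nat.factorial_sum_le fun h => m h + 1
    simp only [sum_add_distrib, sum_const, Finset.card_univ, Fintype.card_fin, smul_eq_mul,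
      mul_one] at this
    exact_mod_cast this
  calc (((∑ h, m h) + n)! : ℝ) * ∏ h, c h ^ m h / (((m h)! : ℝ) * ((m h + 1)! : ℝ))
      ≤ (n : ℝ) ^ ((∑ h, m h) + n) * (∏ h, ((m h + 1)! : ℝ)) *
          ∏ h, c h ^ m h / (((m h)! : ℝ) * ((m h + 1)! : ℝ)) :=
        mul_le_mul_of_nonneg_right hfact (hprod m)
    _ = (n : ℝ) ^ n * ∏ h, ((n : ℝ) * c h) ^ m h / ((m h)! : ℝ) := by
        rw [pow_add, ← prod_pow_eq_pow_sum, mul_comm (∏ h, (n : ℝ) ^ m h), mul_assoc,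
          mul_assoc, ← prod_mul_distrib, ← prod_mul_distrib]
        congr 2 with h
        field_simp
        ring

theorem MeasureTheory.integrable_tsum_of_nonneg {α ι : Type*} [MeasurableSpace α]
    {μ : Measure α} [Countable ι] {F : ι → α → ℝ} (hF_nonneg : ∀ i, 0 ≤ᵐ[μ] F i)
    (hF_int : ∀ i, Integrable (F i) μ) (hF_sum : Summable fun i => ∫ a, F i a ∂μ) :
    Integrable (fun a => ∑' i, F i a) μ := by
  have hmeas : ∀ i, AEMeasurable (fun a => ENNReal.ofReal (F i a)) μ :=
    fun i => (hF_int i).1.aemeasurable.ennreal_ofReal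
  have hfin : ∫⁻ a, ∑' i, ENNReal.ofReal (F i a) ∂μ ≠ ⊤ := by
    rw [lintegral_tsum hmeas]
    simp_rw [← ofReal_integral_eq_lintegral_ofReal (hF_int _) (hF_nonneg _),
      ← ENNReal.ofReal_tsum_of_nonneg (fun i => integral_nonneg_of_ae (hF_nonneg i)) hF_sum]
    exact ENNReal.ofReal_ne_top
  refine (integrable_toReal_of_lintegral_ne_top (AEMeasurable.tsum hmeas) hfin).congr ?_
  filter_upwards [ae_all_iff.2 hF_nonneg] with a ha
  rw [ENNReal.tsum_toReal_eq fun _ => ENNReal.ofReal_ne_top]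
  exact tsum_congr fun i => ENNReal.toReal_ofReal (ha i)

theorem Real.integral_exp_neg_mul_pow (n : ℕ) :
    ∫ w in Ioi (0 : ℝ), exp (-w) * w ^ n = n ! := by
  rw [← Real.Gamma_nat_eq_factorial, Real.Gamma_eq_integral (by positivity)]
  simp [Real.rpow_natCast]

theorem Real.integrableOn_exp_neg_mul_pow (n : ℕ) :
    IntegrableOn (fun w : ℝ => exp (-w) * w ^ n) (Ioi 0) := by
  simpa [Real.rpow_natCast] using Real.GammaIntegral_convergent (s := n + 1) (by positivity)

theorem hasSum_integral_tsum_exp_neg_mul_pow {ι : Type*} [Countable ι] {n : ι → ℕ} {a : ι → ℝ}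
    (ha : ∀ i, 0 ≤ a i) (hs : Summable fun i => ((n i)! : ℝ) * a i) :
    HasSum (fun i => ((n i)! : ℝ) * a i) (∫ w in Ioi 0, ∑' i, exp (-w) * w ^ n i * a i) ∧
      IntegrableOn (fun w => ∑' i, exp (-w) * w ^ n i * a i) (Ioi 0) := by
  set F : ι → ℝ → ℝ := fun i w => exp (-w) * w ^ n i * a i
  have hF_int : ∀ i, IntegrableOn (F i) (Ioi 0) :=
    fun i => (Real.integrableOn_exp_neg_mul_pow _).mul_const _
  have hF_val : ∀ i, ∫ w in Ioi 0, F i w = (n i)! * a i := fun i => by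
    rw [integral_mul_const, Real.integral_exp_neg_mul_pow]
  have hF_nonneg : ∀ i, 0 ≤ᵐ[volume.restrict (Ioi 0)] F i := fun i => by
    filter_upwards [ae_restrict_mem measurableSet_Ioi] with w (hw : 0 < w)
    exact mul_nonneg (by positivity) (ha i)
  have hF_norm : ∀ i, ∫ w in Ioi 0, ‖F i w‖ = (n i)! * a i := fun i => by
    rw [← hF_val]
    exact integral_congr_ae <| (hF_nonneg i).mono fun w hw => Real.norm_of_nonneg hw
  refine ⟨?_, integrable_tsum_of_nonneg hF_nonneg hF_int ?_⟩
  · simpa only [hF_val] using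
      hasSum_integral_of_summable_integral_norm hF_int (by simpa only [hF_norm] using hs)
  · exact (summable_congr hF_val).2 hs

open MeasureTheory in
theorem stmt15 (D : ℕ) (c : Fin (D + 1) → ℝ) (hc : ∀ i, 0 ≤ c i) :
    HasSum
      (fun m : Fin (D + 1) → ℕ =>
        (((∑ h, m h) + D + 1).factorial : ℝ) *
          ∏ h, c h ^ m h / (((m h).factorial : ℝ) * ((m h + 1).factorial : ℝ)))
      (∫ w in Set.Ioi (0 : ℝ), Real.exp (-w) * w ^ (D + 1) *
        ∏ h : Fin (D + 1), ∑' m : ℕ, (c h * w) ^ m /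
          ((m.factorial : ℝ) * ((m + 1).factorial : ℝ))) ∧
    IntegrableOn
      (fun w : ℝ => Real.exp (-w) * w ^ (D + 1) *
        ∏ h : Fin (D + 1), ∑' m : ℕ, (c h * w) ^ m /
          ((m.factorial : ℝ) * ((m + 1).factorial : ℝ)))
      (Set.Ioi 0) := by
  obtain ⟨hsum, hint⟩ := hasSum_integral_tsum_exp_neg_mul_pow
    (n := fun m : Fin (D + 1) → ℕ => (∑ h, m h) + D + 1)
    (fun m => prod_nonneg fun h _ => by have := hc h; positivity)
    (summable_factorial_sum_add_mul_prod hc)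
  have hseries : EqOn (fun w : ℝ => exp (-w) * w ^ (D + 1) *
        ∏ h : Fin (D + 1), ∑' k : ℕ, (c h * w) ^ k / ((k ! : ℝ) * ((k + 1)! : ℝ)))
      (fun w => ∑' m : Fin (D + 1) → ℕ, exp (-w) * w ^ ((∑ h, m h) + D + 1) *
        ∏ h, c h ^ m h / (((m h)! : ℝ) * ((m h + 1)! : ℝ))) (Ioi 0) := fun w (hw : 0 < w) => by
    dsimp only
    rw [← ((hasSum_pow_sum_mul_prod hc hw.le).mul_left (exp (-w) * w ^ (D + 1))).tsum_eq]
    congr 1 with m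
    ring
  rw [setIntegral_congr_fun measurableSet_Ioi hseries]
  exact ⟨hsum, hint.congr_fun hseries.symm measurableSet_Ioi⟩
end

section
/- Let D ≥ 1 be an integer and let λ_h > 0, x_h > 0 and p_h ∈ ℝ be given for h ∈ {0,…,D}, with all indices interpreted modulo D+1 (so λ_{h+k(D+1)} = λ_h, x_{h+k(D+1)} = x_h, p_{h+k(D+1)} = p_h for k ∈ ℤ). Fix j ∈ {1,…,D}. For k ∈ {0,…,D}, interpret the product ∏_{h=k−j+1}^{k−1} over the j−1 consecutive cyclic indices k−j+1, k−j+2, …, k−1 (empty when j = 1), and the product ∏_{h=k+1}^{k+1+D−j} over the D+1−j consecutive cyclic indices k+1, …, k+1+D−j (empty when j = D+1, which does not occur here). Then Σ_{n=1}^{∞} Σ_{k=0}^{D} p_{k−j+1} · ( ∏_{h=k−j+1}^{k−1} λ_h^{n+1} x_h^{n} e^{−λ_h x_h} / n! ) · ( e^{−λ_k x_k} (λ_k x_k)^{n} / n! ) · ( ∏_{h=k+1}^{k+1+D−j} λ_h^{n} x_h^{n−1} e^{−λ_h x_h} / (n−1)! ) = e^{−Σ_{h=0}^{D} λ_h x_h}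 ( ∏_{h=0}^{D} λ_h ) Σ_{k=0}^{D} p_{k−j+1} x_k ( ∏_{h=k−j+1}^{k−1} λ_h x_h ) Σ_{n=0}^{∞} ( ∏_{h=0}^{D} λ_h x_h )^{n} / ( (n!)^{D+1−j} ((n+1)!)^{j} ), and all series involved converge absolutely. -/
/-!
Put `g h = λ_h^(n+1) x_h^n e^{-λ_h x_h}` and `z = ∏ λ_h x_h`. In the `(n+1)`-st summand each factor is
`g` times something simple: `λ_h x_h g h / (n+1)!` on the first block, `x_k g k / (n+1)!` at `k`, and
`g h / n!` on the last block. Since `j ≥ 1`, the three blocks run through the cyclic indices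
`k-j+1, …, k, …, k+D+1-j`, once around `ℤ/(D+1)`, so the `g`-factors multiply to
`e^{-Σ λ_h x_h} (∏ λ_h) z^n`. Hence the summand is a constant multiple of the `n`-th coefficient of the
Bessel-type series, and that coefficient is dominated by `|z|^n / n!`.
-/

open Finset Fin.NatCast

section CyclicProducts

variable {M : Type*} [CommMonoid M] {n : ℕ}

theorem prod_range_add_natCast_eq_prod_univ (g : Fin (n + 1) → M) (c : Fin (n + 1)) :
    ∏ i ∈ range (n + 1), g (c + i) = ∏ h, g h := by
  rw [← Fin.prod_univ_eq_prod_range (fun i => g (c + i))]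
  simp only [Fin.cast_val_eq_self]
  exact Equiv.prod_comp (Equiv.addLeft c) g

theorem prod_range_mul_mul_prod_range_eq_prod_univ {a b : ℕ} (hab : a + 1 + b = n + 1)
    (g : Fin (n + 1) → M) (c : Fin (n + 1)) :
    (∏ i ∈ range a, g (c + i)) * g (c + a) * ∏ i ∈ range b, g (c + a + 1 + i) = ∏ h, g h := by
  have hsplit := prod_range_add (fun i => g (c + i)) (a + 1) b
  rw [hab, prod_range_add_natCast_eq_prod_univ, prod_range_succ] at hsplit
  rw [hsplit]
  congr 1
  refine prod_congr rfl fun i _ => ?_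
  push_cast
  abel_nf

end CyclicProducts

theorem prod_pow_succ_mul_pow_mul_exp {ι : Type*} [Fintype ι] (lam x : ι → ℝ) (n : ℕ) :
    ∏ h, lam h ^ (n + 1) * x h ^ n * Real.exp (-(lam h * x h)) =
      Real.exp (-∑ h, lam h * x h) * (∏ h, lam h) * (∏ h, lam h * x h) ^ n := by
  simp only [pow_succ', mul_pow, prod_mul_distrib, prod_pow, ← sum_neg_distrib, Real.exp_sum]
  ring

theorem summable_pow_div_factorial_pow_mul_succ_factorial_pow (z : ℝ) (a b : ℕ) :
    Summable fun n : ℕ => z ^ n / ((n.factorial : ℝ) ^ b * ((n + 1).factorial : ℝ) ^ (a + 1)) := by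
  refine Summable.of_norm_bounded (Real.summable_pow_div_factorial |z|) fun n => ?_
  have hfac : ∀ m : ℕ, (1 : ℝ) ≤ m.factorial := fun m => by exact_mod_cast m.factorial_pos
  have hden : (n.factorial : ℝ) ≤ (n.factorial : ℝ) ^ b * ((n + 1).factorial : ℝ) ^ (a + 1) :=
    calc (n.factorial : ℝ) ≤ (n + 1).factorial := by exact_mod_cast n.factorial_le n.le_succ
      _ ≤ ((n + 1).factorial : ℝ) ^ (a + 1) := le_self_pow₀ (hfac _) a.succ_ne_zero
      _ ≤ _ := le_mul_of_one_le_left (by positivity) (one_le_pow₀ (hfac n))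
  rw [norm_div, norm_pow, Real.norm_eq_abs, Real.norm_of_nonneg (by positivity)]
  gcongr

theorem cyclic_summand_eq {D a b : ℕ} (hab : a + 1 + b = D + 1) (lam x : Fin (D + 1) → ℝ)
    (c k : Fin (D + 1)) (hk : c + a = k) (n : ℕ) :
    (∏ i ∈ range a, lam (c + i) ^ (n + 1 + 1) * x (c + i) ^ (n + 1) *
        Real.exp (-(lam (c + i) * x (c + i))) / ((n + 1).factorial : ℝ)) *
      (Real.exp (-(lam k * x k)) * (lam k * x k) ^ (n + 1) / ((n + 1).factorial : ℝ)) *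
      (∏ i ∈ range b, lam (k + 1 + i) ^ (n + 1) * x (k + 1 + i) ^ n *
        Real.exp (-(lam (k + 1 + i) * x (k + 1 + i))) / (n.factorial : ℝ)) =
    Real.exp (-∑ h, lam h * x h) * (∏ h, lam h) * (x k * ∏ i ∈ range a, lam (c + i) * x (c + i)) *
      ((∏ h, lam h * x h) ^ n / ((n.factorial : ℝ) ^ b * ((n + 1).factorial : ℝ) ^ (a + 1))) := by
  subst hk
  set g : Fin (D + 1) → ℝ := fun h => lam h ^ (n + 1) * x h ^ n * Real.exp (-(lam h * x h))
  have hfirst : ∏ i ∈ range a, lam (c + i) ^ (n + 1 + 1) * x (c + i) ^ (n + 1) *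
        Real.exp (-(lam (c + i) * x (c + i))) / ((n + 1).factorial : ℝ) =
      (∏ i ∈ range a, lam (c + i) * x (c + i)) * (∏ i ∈ range a, g (c + i)) /
        ((n + 1).factorial : ℝ) ^ a := by
    rw [prod_div_distrib, prod_const, card_range, ← prod_mul_distrib]
    congr 1
    exact prod_congr rfl fun i _ => by ring
  have hlast : ∏ i ∈ range b, lam (c + a + 1 + i) ^ (n + 1) * x (c + a + 1 + i) ^ n *
        Real.exp (-(lam (c + a + 1 + i) * x (c + a + 1 + i))) / (n.factorial : ℝ) =
      (∏ i ∈ range b, g (c + a + 1 + i)) / (n.factorial : ℝ) ^ b := by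
    rw [prod_div_distrib, prod_const, card_range]
  have hmid : Real.exp (-(lam (c + a) * x (c + a))) * (lam (c + a) * x (c + a)) ^ (n + 1) /
      ((n + 1).factorial : ℝ) = x (c + a) * g (c + a) / ((n + 1).factorial : ℝ) := by
    simp only [g]
    ring
  have hg := (prod_range_mul_mul_prod_range_eq_prod_univ hab g c).trans
    (prod_pow_succ_mul_pow_mul_exp lam x n)
  rw [hfirst, hmid, hlast]
  linear_combination (x (c + a) * (∏ i ∈ range a, lam (c + i) * x (c + i)) /
    (((n + 1).factorial : ℝ) ^ (a + 1) * (n.factorial : ℝ) ^ b)) * hg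

theorem stmt16_general (D j : ℕ) (hj1 : 1 ≤ j) (hjD : j ≤ D)
    (lam x p : Fin (D + 1) → ℝ)
    (f : ℕ → Fin (D + 1) → ℝ)
    (hf : ∀ (n : ℕ) (k : Fin (D + 1)), f n k =
      p (k - (j : Fin (D + 1)) + 1) *
      (∏ i ∈ Finset.range (j - 1),
        lam (k - (j : Fin (D + 1)) + 1 + (i : Fin (D + 1))) ^ (n + 1) *
          x (k - (j : Fin (D + 1)) + 1 + (i : Fin (D + 1))) ^ n *
          Real.exp (-(lam (k - (j : Fin (D + 1)) + 1 + (i : Fin (D + 1))) *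
            x (k - (j : Fin (D + 1)) + 1 + (i : Fin (D + 1))))) / (n.factorial : ℝ)) *
      (Real.exp (-(lam k * x k)) * (lam k * x k) ^ n / (n.factorial : ℝ)) *
      (∏ i ∈ Finset.range (D + 1 - j),
        lam (k + 1 + (i : Fin (D + 1))) ^ n * x (k + 1 + (i : Fin (D + 1))) ^ (n - 1) *
          Real.exp (-(lam (k + 1 + (i : Fin (D + 1))) * x (k + 1 + (i : Fin (D + 1))))) /
          ((n - 1).factorial : ℝ))) :
    Summable (fun n : ℕ => |∑ k : Fin (D + 1), f (n + 1) k|) ∧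
    Summable (fun n : ℕ => (∏ h : Fin (D + 1), lam h * x h) ^ n /
      ((n.factorial : ℝ) ^ (D + 1 - j) * ((n + 1).factorial : ℝ) ^ j)) ∧
    ∑' n : ℕ, ∑ k : Fin (D + 1), f (n + 1) k =
      Real.exp (-(∑ h : Fin (D + 1), lam h * x h)) * (∏ h : Fin (D + 1), lam h) *
        ∑ k : Fin (D + 1), p (k - (j : Fin (D + 1)) + 1) * x k *
          (∏ i ∈ Finset.range (j - 1),
            lam (k - (j : Fin (D + 1)) + 1 + (i : Fin (D + 1))) *
              x (k - (j : Fin (D + 1)) + 1 + (i : Fin (D + 1)))) *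
          ∑' n : ℕ, (∏ h : Fin (D + 1), lam h * x h) ^ n /
            ((n.factorial : ℝ) ^ (D + 1 - j) * ((n + 1).factorial : ℝ) ^ j) := by
  obtain ⟨a, rfl⟩ : ∃ a, j = a + 1 := ⟨j - 1, by omega⟩
  simp only [Nat.add_sub_cancel, Nat.add_sub_add_right] at hf ⊢
  have hsummable := summable_pow_div_factorial_pow_mul_succ_factorial_pow
    (∏ h, lam h * x h) a (D - a)
  have hsummand : ∀ n, ∑ k, f (n + 1) k =
      (Real.exp (-∑ h, lam h * x h) * ∏ h, lam h) *
        (∑ k, p (k - ((a + 1 : ℕ) : Fin (D + 1)) + 1) * x k *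
          ∏ i ∈ range a, lam (k - ((a + 1 : ℕ) : Fin (D + 1)) + 1 + i) *
            x (k - ((a + 1 : ℕ) : Fin (D + 1)) + 1 + i)) *
        ((∏ h, lam h * x h) ^ n /
          ((n.factorial : ℝ) ^ (D - a) * ((n + 1).factorial : ℝ) ^ (a + 1))) := by
    intro n
    rw [mul_sum, sum_mul]
    refine sum_congr rfl fun k _ => ?_
    have hk : k - ((a + 1 : ℕ) : Fin (D + 1)) + 1 + a = k := by
      push_cast
      abel
    rw [hf, Nat.add_sub_cancel, mul_assoc _ (∏ i ∈ _, _), mul_assoc,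
      cyclic_summand_eq (by omega) lam x _ k hk n]
    ring
  have hseries := (hsummable.mul_left _).congr fun n => (hsummand n).symm
  refine ⟨hseries.abs, hsummable, ?_⟩
  rw [tsum_congr hsummand, tsum_mul_left, ← sum_mul]
  ring

theorem stmt16 (D j : ℕ) (hD : 1 ≤ D) (hj1 : 1 ≤ j) (hjD : j ≤ D)
    (lam x p : Fin (D + 1) → ℝ) (hlam : ∀ h, 0 < lam h) (hx : ∀ h, 0 < x h)
    (f : ℕ → Fin (D + 1) → ℝ)
    (hf : ∀ (n : ℕ) (k : Fin (D + 1)), f n k =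
      p (k - (j : Fin (D + 1)) + 1) *
      (∏ i ∈ Finset.range (j - 1),
        lam (k - (j : Fin (D + 1)) + 1 + (i : Fin (D + 1))) ^ (n + 1) *
          x (k - (j : Fin (D + 1)) + 1 + (i : Fin (D + 1))) ^ n *
          Real.exp (-(lam (k - (j : Fin (D + 1)) + 1 + (i : Fin (D + 1))) *
            x (k - (j : Fin (D + 1)) + 1 + (i : Fin (D + 1))))) / (n.factorial : ℝ)) *
      (Real.exp (-(lam k * x k)) * (lam k * x k) ^ n / (n.factorial : ℝ)) *
      (∏ i ∈ Finset.range (D + 1 - j),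
        lam (k + 1 + (i : Fin (D + 1))) ^ n * x (k + 1 + (i : Fin (D + 1))) ^ (n - 1) *
          Real.exp (-(lam (k + 1 + (i : Fin (D + 1))) * x (k + 1 + (i : Fin (D + 1))))) /
          ((n - 1).factorial : ℝ))) :
    Summable (fun n : ℕ => |∑ k : Fin (D + 1), f (n + 1) k|) ∧
    Summable (fun n : ℕ => (∏ h : Fin (D + 1), lam h * x h) ^ n /
      ((n.factorial : ℝ) ^ (D + 1 - j) * ((n + 1).factorial : ℝ) ^ j)) ∧
    ∑' n : ℕ, ∑ k : Fin (D + 1), f (n + 1) k =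
      Real.exp (-(∑ h : Fin (D + 1), lam h * x h)) * (∏ h : Fin (D + 1), lam h) *
        ∑ k : Fin (D + 1), p (k - (j : Fin (D + 1)) + 1) * x k *
          (∏ i ∈ Finset.range (j - 1),
            lam (k - (j : Fin (D + 1)) + 1 + (i : Fin (D + 1))) *
              x (k - (j : Fin (D + 1)) + 1 + (i : Fin (D + 1)))) *
          ∑' n : ℕ, (∏ h : Fin (D + 1), lam h * x h) ^ n /
            ((n.factorial : ℝ) ^ (D + 1 - j) * ((n + 1).factorial : ℝ) ^ j) :=
  stmt16_general D j hj1 hjD lam x p f hf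
end
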